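/- Let 1<p<∞, a,b ∈ L^∞(𝕋), f ∈ H^p(𝕋), and n ∈ ℕ. If the equation (T(a)+H(b))φ = f is solvable and φ₀ is a solution, then the equation (T(t^{-n}a) + H(t^n b))ψ = f is also solvable and possesses a solution ψ₀ belonging to the image of the operator T(t^n): H^p(𝕋) → H^p(𝕋); in fact ψ₀ := T(t^n)φ₀ is such a solution. -/

import Mathlib

open MeasureTheory Complex Real BigOperators
open scoped ENNReal

noncomputable section

instance fact2pi : Fact (0 < 2 * π) := ⟨by positivity⟩

/-- The unit circle, modelled additively as `ℝ / 2πℤ`. -/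
abbrev UC : Type := AddCircle (2 * π)

/-- Normalized arc-length (Haar) measure on the circle. -/
abbrev volUC : Measure UC := volume

/-- The Lebesgue space `L^p(𝕋)`. -/
abbrev LpC (p : ℝ≥0∞) : Type := Lp ℂ p volUC

/-- The reflection `ã(t) := a(1/t)` (in additive coordinates, `t ↦ -t`). -/
def tildeF (a : UC → ℂ) : UC → ℂ := fun t => a (-t)

/-- The function `t ↦ t^n` on the circle (in additive coordinates, `fourier n`). -/
def tpow (n : ℤ) : UC → ℂ := fun t => fourier n t

/-- The first function `c := b̃·ã⁻¹` of the subordinated pair (here `atinv` denotes `ã⁻¹`). -/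
def subC (b atinv : UC → ℂ) : UC → ℂ := fun t => tildeF b t * atinv t

/-- The second function `d := b·ã⁻¹` of the subordinated pair. -/
def subD (b atinv : UC → ℂ) : UC → ℂ := fun t => b t * atinv t

/-- The basic operators on `L^p(𝕋)`: the Riesz projection `P` (characterized by its action on
Fourier coefficients), the flip `J`, `(Jf)(t) = t⁻¹ f(1/t)` (characterized on Fourier
coefficients by `n ↦ -n-1`), and the multiplication operators `M a` for `a ∈ L^∞`. -/
structure CircleOps (p : ℝ≥0∞) [Fact (1 ≤ p)] where
  P : LpC p →L[ℂ] LpC p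
  J : LpC p →L[ℂ] LpC p
  M : (UC → ℂ) → LpC p →L[ℂ] LpC p
  P_spec : ∀ (f : LpC p) (n : ℤ),
    fourierCoeff (⇑(P f)) n = if 0 ≤ n then fourierCoeff (⇑f) n else 0
  J_spec : ∀ (f : LpC p) (n : ℤ),
    fourierCoeff (⇑(J f)) n = fourierCoeff (⇑f) (-n - 1)
  M_spec : ∀ (a : UC → ℂ), MemLp a ⊤ volUC →
    ∀ f : LpC p, ⇑(M a f) =ᵐ[volUC] fun t => a t * f t

/-- The Hardy space `H^p(𝕋)`, as the subset of `L^p(𝕋)` of functions whose negatively indexed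
Fourier coefficients vanish. -/
def HardyS (p : ℝ≥0∞) [Fact (1 ≤ p)] : Set (LpC p) :=
  {f | ∀ n : ℤ, n < 0 → fourierCoeff (⇑f) n = 0}

/-- A `2×2` operator matrix acting on `E × E`. -/
def mat2 {E : Type*} [NormedAddCommGroup E] [NormedSpace ℂ E]
    (A B C D : E →L[ℂ] E) : (E × E) →L[ℂ] (E × E) :=
  ((A ∘L ContinuousLinearMap.fst ℂ E E) + (B ∘L ContinuousLinearMap.snd ℂ E E)).prod
    ((C ∘L ContinuousLinearMap.fst ℂ E E) + (D ∘L ContinuousLinearMap.snd ℂ E E))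

namespace CircleOps

variable {p : ℝ≥0∞} [Fact (1 ≤ p)] (O : CircleOps p)

/-- `Q := I - P`. -/
def Q : LpC p →L[ℂ] LpC p := ContinuousLinearMap.id ℂ (LpC p) - O.P

/-- The Toeplitz operator `T(a) := P a P`. -/
def Toep (a : UC → ℂ) : LpC p →L[ℂ] LpC p := O.P ∘L O.M a ∘L O.P

/-- The Hankel operator `H(b) := P b Q J`. -/
def Hank (b : UC → ℂ) : LpC p →L[ℂ] LpC p := O.P ∘L O.M b ∘L O.Q ∘L O.J

/-- `ℛ := diag(T(a)+H(b), T(a)-H(b))`. -/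
def Rdiag (a b : UC → ℂ) : (LpC p × LpC p) →L[ℂ] (LpC p × LpC p) :=
  mat2 (O.Toep a + O.Hank b) 0 0 (O.Toep a - O.Hank b)

/-- `𝒫 := diag(P,P)`. -/
def PP : (LpC p × LpC p) →L[ℂ] (LpC p × LpC p) := mat2 O.P 0 0 O.P

/-- `𝒬 := diag(Q,Q)`. -/
def QQ : (LpC p × LpC p) →L[ℂ] (LpC p × LpC p) := mat2 O.Q 0 0 O.Q

/-- `𝒥 := (1/2)[[I,J],[I,-J]]`. -/
def Jop : (LpC p × LpC p) →L[ℂ] (LpC p × LpC p) :=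
  (2:ℂ)⁻¹ • mat2 (ContinuousLinearMap.id ℂ (LpC p)) O.J (ContinuousLinearMap.id ℂ (LpC p)) (-O.J)

/-- `𝒥⁻¹ = [[I,I],[J,-J]]`. -/
def Jinv : (LpC p × LpC p) →L[ℂ] (LpC p × LpC p) :=
  mat2 (ContinuousLinearMap.id ℂ (LpC p)) (ContinuousLinearMap.id ℂ (LpC p)) O.J (-O.J)

/-- `T(V(a,b)) = 𝒫 V(a,b) 𝒫`, where `V(a,b) = [[a - b b̃ ã⁻¹, b ã⁻¹],[-b̃ ã⁻¹, ã⁻¹]]`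
(`atinv` denotes `ã⁻¹`). -/
def TV (a b atinv : UC → ℂ) : (LpC p × LpC p) →L[ℂ] (LpC p × LpC p) :=
  mat2 (O.Toep fun t => a t - b t * tildeF b t * atinv t)
    (O.Toep fun t => b t * atinv t)
    (O.Toep fun t => -(tildeF b t * atinv t))
    (O.Toep atinv)

/-- `𝒫 V(a,b) 𝒬`. -/
def PVQ (a b atinv : UC → ℂ) : (LpC p × LpC p) →L[ℂ] (LpC p × LpC p) :=
  mat2 (O.P ∘L O.M (fun t => a t - b t * tildeF b t * atinv t) ∘L O.Q)
    (O.P ∘L O.M (fun t => b t * atinv t) ∘L O.Q)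
    (O.P ∘L O.M (fun t => -(tildeF b t * atinv t)) ∘L O.Q)
    (O.P ∘L O.M atinv ∘L O.Q)

/-- `A₁ := I - diag(P,Q)·[[a,b],[b̃,ã]]·diag(Q,P)`. -/
def A1 (a b : UC → ℂ) : (LpC p × LpC p) →L[ℂ] (LpC p × LpC p) :=
  ContinuousLinearMap.id ℂ (LpC p × LpC p) -
    mat2 (O.P ∘L O.M a ∘L O.Q) (O.P ∘L O.M b ∘L O.P)
      (O.Q ∘L O.M (tildeF b) ∘L O.Q) (O.Q ∘L O.M (tildeF a) ∘L O.P)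

/-- `A₂ := I + 𝒫 V(a,b) 𝒬`. -/
def A2 (a b atinv : UC → ℂ) : (LpC p × LpC p) →L[ℂ] (LpC p × LpC p) :=
  ContinuousLinearMap.id ℂ (LpC p × LpC p) + O.PVQ a b atinv

/-- The operator `W φ := T_r⁻¹(c) T(ã⁻¹) φ - J Q c P T_r⁻¹(c) T(ã⁻¹) φ + J Q ã⁻¹ φ`,
where `Trc` is (the chosen right inverse) `T_r⁻¹(c)`. -/
def Wop (c atinv : UC → ℂ) (Trc : LpC p →L[ℂ] LpC p) : LpC p →L[ℂ] LpC p :=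
  Trc ∘L O.Toep atinv
    - O.J ∘L O.Q ∘L O.M c ∘L O.P ∘L Trc ∘L O.Toep atinv
    + O.J ∘L O.Q ∘L O.M atinv

/-- The particular solution
`Tc T(ã⁻¹) Td f - J Q c Tc T(ã⁻¹) Td f + J Q ã⁻¹ Td f`, where `Tc`, `Td` are
(one-sided) inverses of `T(c)`, `T(d)`. -/
def baseSol (c atinv : UC → ℂ) (Tc Td : LpC p →L[ℂ] LpC p) (f : LpC p) : LpC p :=
  Tc (O.Toep atinv (Td f)) - O.J (O.Q (O.M c (Tc (O.Toep atinv (Td f)))))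
    + O.J (O.Q (O.M atinv (Td f)))

end CircleOps

/-- Wiener–Hopf factorization data for `g` in the sense of the paper:
`g = g₋ t^n g₊` with `n = -ind` (so `ind = ind T(g)`), together with the membership and
normalization conditions.  (For simplicity all factors are taken essentially bounded.) -/
structure WHFact (g : UC → ℂ) where
  ind : ℤ
  gp : UC → ℂ
  gm : UC → ℂ
  gpInv : UC → ℂ
  gmInv : UC → ℂ
  hgp : MemLp gp ⊤ volUC
  hgm : MemLp gm ⊤ volUC
  hgpInv : MemLp gpInv ⊤ volUC
  hgmInv : MemLp gmInv ⊤ volUC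
  hp_inv : ∀ᵐ t ∂volUC, gp t * gpInv t = 1
  hm_inv : ∀ᵐ t ∂volUC, gm t * gmInv t = 1
  hfact : ∀ᵐ t ∂volUC, g t = gm t * tpow (-ind) t * gp t
  hgpH : ∀ n : ℤ, n < 0 → fourierCoeff gp n = 0
  hgpInvH : ∀ n : ℤ, n < 0 → fourierCoeff gpInv n = 0
  hgmH : ∀ n : ℤ, 0 < n → fourierCoeff gm n = 0
  hgmInvH : ∀ n : ℤ, 0 < n → fourierCoeff gmInv n = 0
  hgmInfty : fourierCoeff gm 0 = 1

/-- The right inverse `T_r⁻¹(g) := T(g₊⁻¹) T(g₋⁻¹) T(t^{-n})`, `n = -ind ≤ 0`. -/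
def WHFact.Tr {g : UC → ℂ} (F : WHFact g) {p : ℝ≥0∞} [Fact (1 ≤ p)] (O : CircleOps p) :
    LpC p →L[ℂ] LpC p :=
  O.Toep F.gpInv ∘L O.Toep F.gmInv ∘L O.Toep (tpow F.ind)

/-- The left inverse `T_l⁻¹(g) := T(t^{-n}) T(g₊⁻¹) T(g₋⁻¹)`, `n = -ind ≥ 0`. -/
def WHFact.Tl {g : UC → ℂ} (F : WHFact g) {p : ℝ≥0∞} [Fact (1 ≤ p)] (O : CircleOps p) :
    LpC p →L[ℂ] LpC p :=
  O.Toep (tpow F.ind) ∘L O.Toep F.gpInv ∘L O.Toep F.gmInv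

/-- The number of kernel basis functions `u_0, …, u_{κ(i)}`: `m` if `κ = 2m`, `m+1` if
`κ = 2m+1`. -/
def numU (κ : ℤ) : ℕ := ((κ + 1) / 2).toNat

/-- The functions `u_k^{(κ(s),±)}`: for `κ = 2m`, `u_k(t) = t^{m-k-1} ± σ t^{m+k}`; for
`κ = 2m+1`, `u_k(t) = t^{m+k} ± σ t^{m-k}`.  Here `sgn = ±1`, and `σ` is the factorization
signature. -/
def ubasis (κ : ℤ) (σ sgn : ℂ) (k : ℕ) : UC → ℂ :=
  if κ % 2 = 0 then
    fun t => fourier (κ / 2 - (k:ℤ) - 1) t + sgn * σ * fourier (κ / 2 + (k:ℤ)) t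
  else
    fun t => fourier (κ / 2 + (k:ℤ)) t + sgn * σ * fourier (κ / 2 - (k:ℤ)) t

/-- `sign(r)`: `0` if `r = 0` and `1` if `r > 0` (as a complex scalar). -/
def sgnInd (κ : ℤ) : ℂ := if κ = 0 then 0 else 1

/-! For `φ ∈ H^p` the function `t^n φ` again lies in `H^p`, so `T(t^n) φ = t^n φ`. Then
`T(t^{-n} a)(t^n φ) = P(a φ) = T(a) φ`; and since `J(t^n φ) = t^{-n} J φ` while `J` maps `H^p`
into the range of `Q`, also `H(t^n b)(t^n φ) = P(b J φ) = H(b) φ`.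

As `P` and `J` are only known through their action on Fourier coefficients, these identities are
checked coefficientwise, which needs that the Fourier coefficients determine an integrable function
on the circle: by density of trigonometric polynomials such a function integrates to zero against
every continuous function, and continuous functions approximate indicators of closed sets. -/

open BoundedContinuousFunction Filter HasOuterApproxClosed Topology in
theorem ae_eq_zero_of_forall_integral_smul_eq_zero {X E : Type*} [TopologicalSpace X]
    [HasOuterApproxClosed X] [MeasurableSpace X] [BorelSpace X]
    [NormedAddCommGroup E] [NormedSpace ℝ E] [CompleteSpace E] {μ : Measure X} {h : X → E}
    (hI : Integrable h μ) (h0 : ∀ φ : X →ᵇ NNReal, ∫ x, (φ x : ℝ) • h x ∂μ = 0) :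
    h =ᵐ[μ] 0 := by
  refine ae_eq_zero_of_forall_setIntegral_isClosed_eq_zero hI fun s hs => ?_
  have hlim : Tendsto (fun k => ∫ x, (hs.apprSeq k x : ℝ) • h x ∂μ) atTop
      (𝓝 (∫ x, s.indicator h x ∂μ)) := by
    refine tendsto_integral_of_dominated_convergence (fun x => ‖h x‖)
      (fun k => (NNReal.continuous_coe.comp (hs.apprSeq k).continuous).aestronglyMeasurable.smul
        hI.aestronglyMeasurable) hI.norm (fun k => .of_forall fun x => ?_) (.of_forall fun x => ?_)
    · rw [norm_smul, NNReal.norm_eq]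
      exact mul_le_of_le_one_left (norm_nonneg _) (by exact_mod_cast apprSeq_apply_le_one hs k x)
    · have := ((NNReal.continuous_coe.tendsto _).comp
        (tendsto_pi_nhds.1 (tendsto_apprSeq hs) x)).smul_const (h x)
      by_cases hx : x ∈ s <;> simpa [hx] using this
  rw [← integral_indicator hs.measurableSet]
  exact tendsto_nhds_unique hlim (by simp only [h0, tendsto_const_nhds])

namespace AddCircle

variable {T : ℝ} [hT : Fact (0 < T)]

theorem ae_haarAddCircle_iff {P : AddCircle T → Prop} :
    (∀ᵐ t ∂haarAddCircle, P t) ↔ ∀ᵐ t, P t := by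
  rw [volume_eq_smul_haarAddCircle,
    Measure.ae_ennreal_smul_measure_iff (ENNReal.ofReal_pos.2 hT.out).ne']

theorem integrable_haarAddCircle_iff {f : AddCircle T → ℂ} :
    Integrable f haarAddCircle ↔ Integrable f := by
  simpa only [memLp_one_iff_integrable] using memLp_haarAddCircle_iff (p := 1)

theorem integral_continuousMap_mul_eq_zero_of_fourierCoeff_eq_zero {h : AddCircle T → ℂ}
    (hI : Integrable h haarAddCircle) (hc : ∀ n, fourierCoeff h n = 0)
    (φ : C(AddCircle T, ℂ)) : ∫ t, φ t * h t ∂haarAddCircle = 0 := by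
  have hint (ψ : C(AddCircle T, ℂ)) : Integrable (fun t => ψ t * h t) haarAddCircle :=
    hI.bdd_mul ψ.continuous.aestronglyMeasurable (.of_forall ψ.norm_coe_le_norm)
  let Φ : C(AddCircle T, ℂ) →L[ℂ] ℂ := LinearMap.mkContinuous
    { toFun := fun ψ => ∫ t, ψ t * h t ∂haarAddCircle
      map_add' := fun ψ χ => by simpa [add_mul] using integral_add (hint ψ) (hint χ)
      map_smul' := fun c ψ => by simpa [mul_assoc] using integral_const_mul c _ }
    (∫ t, ‖h t‖ ∂haarAddCircle) fun ψ => by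
      rw [mul_comm, ← integral_const_mul]
      refine norm_integral_le_of_norm_le (hI.norm.const_mul _) (.of_forall fun t => ?_)
      rw [norm_mul]
      gcongr
      exact ψ.norm_coe_le_norm t
  have hspan : Submodule.span ℂ (Set.range fourier) ≤ LinearMap.ker Φ.toLinearMap :=
    Submodule.span_le.2 <| Set.range_subset_iff.2 fun n => by
      simpa [Φ, fourierCoeff, -fourier_apply] using hc (-n)
  have := Submodule.topologicalClosure_minimal _ hspan Φ.isClosed_ker
  rw [span_fourier_closure_eq_top] at this
  exact this Submodule.mem_top

theorem ae_eq_zero_of_fourierCoeff_eq_zero {h : AddCircle T → ℂ}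
    (hI : Integrable h haarAddCircle) (hc : ∀ n, fourierCoeff h n = 0) :
    h =ᵐ[haarAddCircle] 0 :=
  ae_eq_zero_of_forall_integral_smul_eq_zero hI fun φ => by
    simp only [Complex.real_smul]
    exact integral_continuousMap_mul_eq_zero_of_fourierCoeff_eq_zero hI hc
      ⟨fun t => (φ t : ℂ), by fun_prop⟩

end AddCircle

section fourierCoeff

variable {T : ℝ} [Fact (0 < T)]

open AddCircle

theorem fourierCoeff_congr_ae_volume {f g : AddCircle T → ℂ} (h : f =ᵐ[volume] g) :
    fourierCoeff f = fourierCoeff g :=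
  fourierCoeff_congr_ae (ae_haarAddCircle_iff.2 h)

theorem fourierCoeff.sub {f g : AddCircle T → ℂ} (hf : Integrable f haarAddCircle)
    (hg : Integrable g haarAddCircle) :
    fourierCoeff (f - g) = fourierCoeff f - fourierCoeff g := by
  ext n
  simpa [fourierCoeff, mul_sub, -fourier_apply] using
    integral_sub (hf.fourier_smul (-n)) (hg.fourier_smul (-n))

theorem fourierCoeff_fourier_mul (k : ℤ) (f : AddCircle T → ℂ) (n : ℤ) :
    fourierCoeff (fun t => fourier k t * f t) n = fourierCoeff f (n - k) := by
  refine integral_congr_ae (.of_forall fun t => ?_)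
  simp only [smul_eq_mul, ← mul_assoc, ← fourier_add]
  congr 3
  ring

theorem MeasureTheory.Lp.ext_fourierCoeff {p : ℝ≥0∞} [Fact (1 ≤ p)]
    {f g : Lp ℂ p (volume : Measure (AddCircle T))}
    (h : ∀ n, fourierCoeff f n = fourierCoeff g n) : f = g := by
  have hf := integrable_haarAddCircle_iff.2 ((Lp.memLp f).integrable Fact.out)
  have hg := integrable_haarAddCircle_iff.2 ((Lp.memLp g).integrable Fact.out)
  refine Lp.ext ((sub_ae_eq_zero _ _).1 (ae_haarAddCircle_iff.1 ?_))
  refine ae_eq_zero_of_fourierCoeff_eq_zero (hf.sub hg) fun n => ?_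
  rw [fourierCoeff.sub hf hg, Pi.sub_apply, h, sub_self]

end fourierCoeff

theorem memLp_top_tpow (k : ℤ) : MemLp (tpow k) ⊤ volUC :=
  memLp_top_of_bound (map_continuous (fourier k)).aestronglyMeasurable 1
    (.of_forall fun t => by simp [tpow, Circle.norm_coe])

theorem tpow_mul_tpow_neg (k : ℤ) (t : UC) : tpow k t * tpow (-k) t = 1 := by
  rw [tpow, tpow, ← fourier_add, add_neg_cancel, fourier_zero]

namespace CircleOps

variable {p : ℝ≥0∞} [Fact (1 ≤ p)] (O : CircleOps p)

theorem M_M_apply {u v : UC → ℂ} (hu : MemLp u ⊤ volUC) (hv : MemLp v ⊤ volUC) (g : LpC p) :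
    O.M u (O.M v g) = O.M (fun t => u t * v t) g := by
  refine Lp.ext ?_
  filter_upwards [O.M_spec u hu (O.M v g), O.M_spec v hv g,
    O.M_spec _ (MemLp.mul' (p := ⊤) (q := ⊤) hv hu) g] with t h₁ h₂ h₃
  rw [h₁, h₂, h₃, mul_assoc]

theorem fourierCoeff_M_tpow (k : ℤ) (g : LpC p) (n : ℤ) :
    fourierCoeff (O.M (tpow k) g) n = fourierCoeff g (n - k) := by
  rw [fourierCoeff_congr_ae_volume (O.M_spec _ (memLp_top_tpow k) g)]
  exact fourierCoeff_fourier_mul k g n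

theorem fourierCoeff_Q (g : LpC p) (n : ℤ) :
    fourierCoeff (O.Q g) n = if 0 ≤ n then 0 else fourierCoeff g n := by
  have hI (h : LpC p) : Integrable h AddCircle.haarAddCircle :=
    AddCircle.integrable_haarAddCircle_iff.2 ((Lp.memLp h).integrable Fact.out)
  rw [Q, sub_apply, ContinuousLinearMap.id_apply,
    fourierCoeff_congr_ae_volume (Lp.coeFn_sub _ _), fourierCoeff.sub (hI g) (hI _),
    Pi.sub_apply, P_spec]
  split_ifs <;> simp

theorem P_eq_self_of_mem_hardyS {g : LpC p} (hg : g ∈ HardyS p) : O.P g = g :=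
  Lp.ext_fourierCoeff fun n => by
    rw [P_spec]
    split_ifs with hn
    · rfl
    · exact (hg n (not_le.1 hn)).symm

theorem Q_J_eq_self_of_mem_hardyS {g : LpC p} (hg : g ∈ HardyS p) : O.Q (O.J g) = O.J g :=
  Lp.ext_fourierCoeff fun n => by
    rw [fourierCoeff_Q, J_spec]
    split_ifs with hn
    · exact (hg _ (by omega)).symm
    · rfl

theorem M_tpow_natCast_mem_hardyS (k : ℕ) {g : LpC p} (hg : g ∈ HardyS p) :
    O.M (tpow k) g ∈ HardyS p := fun n hn => by
  rw [fourierCoeff_M_tpow]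
  exact hg _ (by omega)

theorem J_M_tpow (k : ℤ) (g : LpC p) : O.J (O.M (tpow k) g) = O.M (tpow (-k)) (O.J g) :=
  Lp.ext_fourierCoeff fun n => by
    rw [J_spec, fourierCoeff_M_tpow, fourierCoeff_M_tpow, J_spec]
    ring_nf

theorem Toep_tpow_natCast_of_mem_hardyS (k : ℕ) {g : LpC p} (hg : g ∈ HardyS p) :
    O.Toep (tpow k) g = O.M (tpow k) g := by
  simp only [Toep, ContinuousLinearMap.comp_apply]
  rw [O.P_eq_self_of_mem_hardyS hg, O.P_eq_self_of_mem_hardyS (O.M_tpow_natCast_mem_hardyS k hg)]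

theorem Toep_tpow_neg_mul_apply_M_tpow (k : ℕ) {a : UC → ℂ} (ha : MemLp a ⊤ volUC)
    {g : LpC p} (hg : g ∈ HardyS p) :
    O.Toep (fun t => tpow (-(k : ℤ)) t * a t) (O.M (tpow k) g) = O.Toep a g := by
  simp only [Toep, ContinuousLinearMap.comp_apply]
  rw [O.P_eq_self_of_mem_hardyS (O.M_tpow_natCast_mem_hardyS k hg), O.P_eq_self_of_mem_hardyS hg,
    O.M_M_apply (MemLp.mul' (p := ⊤) (q := ⊤) ha (memLp_top_tpow _)) (memLp_top_tpow _)]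
  congr 3 with t
  rw [mul_right_comm, mul_comm (tpow _ t), tpow_mul_tpow_neg, one_mul]

theorem Hank_tpow_mul_apply_M_tpow (k : ℕ) {b : UC → ℂ} (hb : MemLp b ⊤ volUC)
    {g : LpC p} (hg : g ∈ HardyS p) :
    O.Hank (fun t => tpow k t * b t) (O.M (tpow k) g) = O.Hank b g := by
  simp only [Hank, ContinuousLinearMap.comp_apply]
  rw [O.Q_J_eq_self_of_mem_hardyS (O.M_tpow_natCast_mem_hardyS k hg),
    O.Q_J_eq_self_of_mem_hardyS hg, J_M_tpow,
    O.M_M_apply (MemLp.mul' (p := ⊤) (q := ⊤) hb (memLp_top_tpow _)) (memLp_top_tpow _)]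
  congr 3 with t
  rw [mul_right_comm, tpow_mul_tpow_neg, one_mul]

end CircleOps

theorem stmt6_general (p : ℝ≥0∞) [Fact (1 ≤ p)]
    (a b : UC → ℂ) (ha : MemLp a ⊤ volUC) (hb : MemLp b ⊤ volUC)
    (O : CircleOps p) (n : ℕ)
    (f φ₀ : LpC p) (hφ : φ₀ ∈ HardyS p)
    (hsol : (O.Toep a + O.Hank b) φ₀ = f) :
    O.Toep (tpow (n : ℤ)) φ₀ ∈ HardyS p ∧
    O.Toep (tpow (n : ℤ)) φ₀ ∈ O.Toep (tpow (n : ℤ)) '' HardyS p ∧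
    (O.Toep (fun t => tpow (-(n : ℤ)) t * a t) + O.Hank (fun t => tpow (n : ℤ) t * b t))
        (O.Toep (tpow (n : ℤ)) φ₀) = f := by
  have hψ : O.Toep (tpow n) φ₀ = O.M (tpow n) φ₀ := O.Toep_tpow_natCast_of_mem_hardyS n hφ
  refine ⟨hψ ▸ O.M_tpow_natCast_mem_hardyS n hφ, ⟨φ₀, hφ, rfl⟩, ?_⟩
  rw [hψ, add_apply, O.Toep_tpow_neg_mul_apply_M_tpow n ha hφ,
    O.Hank_tpow_mul_apply_M_tpow n hb hφ, ← add_apply, hsol]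

/-- Lemma 3.6: if `(T(a)+H(b))φ = f` is solvable with solution `φ₀`, then
`(T(t^{-n}a) + H(t^n b))ψ = f` is solvable with the solution `ψ₀ = T(t^n)φ₀`, which belongs to
the image of `T(t^n) : H^p → H^p`. -/
theorem stmt6 (p : ℝ≥0∞) [Fact (1 ≤ p)] (hp : 1 < p) (hp' : p ≠ ⊤)
    (a b : UC → ℂ) (ha : MemLp a ⊤ volUC) (hb : MemLp b ⊤ volUC)
    (O : CircleOps p) (n : ℕ)
    (f φ₀ : LpC p) (hf : f ∈ HardyS p) (hφ : φ₀ ∈ HardyS p)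
    (hsol : (O.Toep a + O.Hank b) φ₀ = f) :
    O.Toep (tpow (n : ℤ)) φ₀ ∈ HardyS p ∧
    O.Toep (tpow (n : ℤ)) φ₀ ∈ O.Toep (tpow (n : ℤ)) '' HardyS p ∧
    (O.Toep (fun t => tpow (-(n : ℤ)) t * a t) + O.Hank (fun t => tpow (n : ℤ) t * b t))
        (O.Toep (tpow (n : ℤ)) φ₀) = f :=
  stmt6_general p a b ha hb O n f φ₀ hφ hsol

end
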